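/- arXiv:1109.2374 — 2 statements merged into one kernel-verified Lean document; each statement's English description precedes it below -/
import Mathlib

section
/- (Theorem 1(i)) Assume covariance T_V(E) = P_V(E). Then for every ψ ∈ C, the family T_V(M_V(ψ)) is an extra condition for the system P_V(E) (i.e. P_V(E) ∩ T_V(M_V(ψ)) is a singleton), and the relativity principle condition T_V([M_V(ψ)]_E) = [P_V(ψ)]_{P_V(E)} for all ψ ∈ C is equivalent to the condition [T_V(M_V(ψ))]_{P_V(E)} = [P_V(ψ)]_{P_V(E)} for all ψ ∈ C. -/
/-- Theorem 1(i): under covariance, T_V(M_V(ψ)) is an extra condition for P_V(E),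
and the RP is equivalent to [T_V(M_V(ψ))]_{P_V(E)} = [P_V(ψ)]_{P_V(E)}. -/
theorem stmt11 {Ω Ω' : Type*} (R : Set Ω) (R' : Set Ω')
    (P : Ω ≃ Ω') (T : Ω → Ω') (hT : Set.BijOn T R R')
    (E : Set (Set Ω)) (hE : ∀ F ∈ E, F ⊆ R)
    (C : Set (Set (Set Ω))) (hC : ∀ ψ ∈ C, ∀ F ∈ ψ, F ⊆ R)
    (sol : Set (Set Ω) → Set Ω)
    (hsol : ∀ ψ ∈ C, E ∩ ψ = {sol ψ}) (hbij : Set.BijOn sol C E)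
    (M : Set Ω → Set Ω) (hM : Set.MapsTo M E E)
    (MC : Set (Set Ω) → Set (Set Ω)) (hMC : Set.MapsTo MC C C)
    (hMCsol : ∀ ψ ∈ C, sol (MC ψ) = M (sol ψ))
    (hcov : (fun F => T '' F) '' E = (fun F => P '' F) '' E) :
    (∀ ψ ∈ C, ∃ G₀ : Set Ω',
        (fun F => P '' F) '' E ∩ (fun F => T '' F) '' (MC ψ) = {G₀}) ∧
    ((∀ ψ ∈ C, (fun F => P '' F) '' E ∩ (fun F => P '' F) '' ψ
          = {T '' (sol (MC ψ))})
      ↔ (∀ ψ ∈ C, (fun F => P '' F) '' E ∩ (fun F => T '' F) '' (MC ψ)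
          = (fun F => P '' F) '' E ∩ (fun F => P '' F) '' ψ)) := by
  have key : ∀ ψ ∈ C,
      (fun F => T '' F) '' E ∩ (fun F => T '' F) '' (MC ψ) = {T '' (sol (MC ψ))} := by
    intro ψ hψ
    have hMCψ := hMC hψ
    have hs := hsol (MC ψ) hMCψ
    ext G
    simp only [Set.mem_inter_iff, Set.mem_image, Set.mem_singleton_iff]
    constructor
    · rintro ⟨⟨F₁, hF₁, rfl⟩, F₂, hF₂, hEq⟩
      have h12 : F₂ = F₁ :=
        (hT.injOn.image_eq_image_iff (hC _ hMCψ _ hF₂) (hE _ hF₁)).mp hEq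
      subst h12
      have hmem : F₂ ∈ E ∩ MC ψ := ⟨hF₁, hF₂⟩
      rw [hs] at hmem
      rw [hmem]
    · rintro rfl
      have hmem : sol (MC ψ) ∈ E ∩ MC ψ := by rw [hs]; rfl
      exact ⟨⟨_, hmem.1, rfl⟩, _, hmem.2, rfl⟩
  constructor
  · intro ψ hψ
    exact ⟨T '' (sol (MC ψ)), by rw [← hcov, key ψ hψ]⟩
  · constructor
    · intro h ψ hψ
      rw [h ψ hψ, ← hcov, key ψ hψ]
    · intro h ψ hψ
      rw [← h ψ hψ, ← hcov, key ψ hψ]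
end

section
/- (Theorem 1(ii)) Assume covariance T_V(E) = P_V(E), and assume every member of P_V(ψ) is a subset of R' for all ψ ∈ C. Then for every ψ ∈ C, T_V⁻¹(P_V(ψ)) is an extra condition for E, and the condition [M_V(ψ)]_E = T_V⁻¹([P_V(ψ)]_{P_V(E)}) for all ψ ∈ C is equivalent to [M_V(ψ)]_E = [T_V⁻¹(P_V(ψ))]_E for all ψ ∈ C. -/
/-- Theorem 1(ii): under covariance, T_V⁻¹(P_V(ψ)) is an extra condition for E,
and [M_V(ψ)]_E = T_V⁻¹([P_V(ψ)]_{P_V(E)}) is equivalent to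
[M_V(ψ)]_E = [T_V⁻¹(P_V(ψ))]_E. -/
theorem stmt12 {Ω Ω' : Type*} (R : Set Ω) (R' : Set Ω')
    (P : Ω ≃ Ω') (T : Ω → Ω') (S : Ω' → Ω)
    (hT : Set.BijOn T R R') (hS : Set.InvOn S T R R')
    (E : Set (Set Ω)) (hE : ∀ F ∈ E, F ⊆ R)
    (C : Set (Set (Set Ω))) (hC : ∀ ψ ∈ C, ∀ F ∈ ψ, P '' F ⊆ R')
    (sol : Set (Set Ω) → Set Ω)
    (hsol : ∀ ψ ∈ C, E ∩ ψ = {sol ψ}) (hbij : Set.BijOn sol C E)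
    (M : Set Ω → Set Ω) (hM : Set.MapsTo M E E)
    (MC : Set (Set Ω) → Set (Set Ω)) (hMC : Set.MapsTo MC C C)
    (hMCsol : ∀ ψ ∈ C, sol (MC ψ) = M (sol ψ))
    (hcov : (fun F => T '' F) '' E = (fun F => P '' F) '' E) :
    (∀ ψ ∈ C, ∃ G₀ : Set Ω,
        E ∩ (fun G => S '' G) '' ((fun F => P '' F) '' ψ) = {G₀}) ∧
    ((∀ ψ ∈ C, ∀ G : Set Ω',
        (fun F => P '' F) '' E ∩ (fun F => P '' F) '' ψ = {G} →
        sol (MC ψ) = S '' G)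
      ↔ (∀ ψ ∈ C,
          E ∩ (fun G => S '' G) '' ((fun F => P '' F) '' ψ) = {sol (MC ψ)})) := by
  have hPinj : Function.Injective (fun F : Set Ω => P '' F) :=
    Set.image_injective.mpr P.injective
  have hST : ∀ F : Set Ω, F ⊆ R → S '' (T '' F) = F := by
    intro F hF
    rw [← Set.image_comp]
    have : Set.EqOn (S ∘ T) id F := fun x hx => hS.1 (hF hx)
    rw [Set.EqOn.image_eq this, Set.image_id]
  have hTS : ∀ G : Set Ω', G ⊆ R' → T '' (S '' G) = G := by
    intro G hG
    rw [← Set.image_comp]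
    have : Set.EqOn (T ∘ S) id G := fun y hy => hS.2 (hG hy)
    rw [Set.EqOn.image_eq this, Set.image_id]
  -- L1 : P''E ∩ P''ψ = {P''(sol ψ)}
  have L1 : ∀ ψ ∈ C, (fun F => P '' F) '' E ∩ (fun F => P '' F) '' ψ
      = {P '' (sol ψ)} := by
    intro ψ hψ
    rw [← Set.image_inter hPinj, hsol ψ hψ, Set.image_singleton]
  -- L2 : E ∩ S''(P''ψ) = {S''(P''(sol ψ))}
  have L2 : ∀ ψ ∈ C, E ∩ (fun G => S '' G) '' ((fun F => P '' F) '' ψ)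
      = {S '' (P '' (sol ψ))} := by
    intro ψ hψ
    ext H
    constructor
    · rintro ⟨hHE, G, ⟨F, hFψ, rfl⟩, rfl⟩
      have hTH : T '' (S '' (P '' F)) = P '' F := hTS _ (hC ψ hψ F hFψ)
      have hmem : T '' (S '' (P '' F)) ∈ (fun F => P '' F) '' E := by
        rw [← hcov]; exact ⟨S '' (P '' F), hHE, rfl⟩
      rw [hTH] at hmem
      obtain ⟨F₀, hF₀E, hF₀⟩ := hmem
      have hF₀F : F₀ = F := hPinj hF₀
      subst hF₀F
      have : F₀ ∈ E ∩ ψ := ⟨hF₀E, hFψ⟩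
      rw [hsol ψ hψ] at this
      rw [this]
      rfl
    · rintro rfl
      have hsolmem : sol ψ ∈ E ∩ ψ := by rw [hsol ψ hψ]; rfl
      refine ⟨?_, P '' (sol ψ), ⟨sol ψ, hsolmem.2, rfl⟩, rfl⟩
      have hmem : P '' (sol ψ) ∈ (fun F => T '' F) '' E := by
        rw [hcov]; exact ⟨sol ψ, hsolmem.1, rfl⟩
      obtain ⟨F₀, hF₀E, hF₀⟩ := hmem
      rw [← hF₀, hST F₀ (hE F₀ hF₀E)]
      exact hF₀E
  refine ⟨fun ψ hψ => ⟨_, L2 ψ hψ⟩, ?_, ?_⟩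
  · intro h ψ hψ
    have := h ψ hψ (P '' (sol ψ)) (L1 ψ hψ)
    rw [this, L2 ψ hψ]
  · intro h ψ hψ G hG
    have hG' : G = P '' (sol ψ) := by
      have := (L1 ψ hψ).symm.trans hG
      exact (Set.singleton_eq_singleton_iff.mp this).symm
    have := (L2 ψ hψ).symm.trans (h ψ hψ)
    rw [hG', ← Set.singleton_eq_singleton_iff.mp this]
end
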